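/- arXiv:1311.0451 — 3 statements merged into one kernel-verified Lean document; each statement's English description precedes it below -/
import Mathlib

section
/- Let (X,f) be a non-wandering equicontinuous dynamical system with the shadowing property. Then every point of X is regularly recurrent. -/
/-!
By equicontinuity a non-wandering point `x` is recurrent, so some `f^[k] x` returns `δ`-close
to `x`. The `k`-periodic sequence `x, f x, …, f^[k-1] x, x, f x, …` is then a `δ`-pseudo-orbit,
and a point `z` shadowing it stays close to `x` at all times `k * n`. Since `z` is itself close
to `x`, equicontinuity transfers this to the orbit of `x`.
-/

open Set Function

variable {X : Type*}

/-- A `δ`-pseudo-orbit of `f`. -/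
def IsPseudoOrbit [MetricSpace X] (f : X → X) (δ : ℝ) (x : ℕ → X) : Prop :=
  ∀ n : ℕ, dist (f (x n)) (x (n + 1)) < δ

/-- `z` ε-traces the sequence `x`. -/
def Traces [MetricSpace X] (f : X → X) (ε : ℝ) (z : X) (x : ℕ → X) : Prop :=
  ∀ n : ℕ, dist (f^[n] z) (x n) < ε

/-- The shadowing property. -/
def HasShadowing [MetricSpace X] (f : X → X) : Prop :=
  ∀ ε > (0 : ℝ), ∃ δ > (0 : ℝ), ∀ x : ℕ → X, IsPseudoOrbit f δ x → ∃ z : X, Traces f ε z x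

/-- The shadowing property of the restriction of `f` to an invariant set `S`. -/
def HasShadowingOn [MetricSpace X] (f : X → X) (S : Set X) : Prop :=
  ∀ ε > (0 : ℝ), ∃ δ > (0 : ℝ), ∀ x : ℕ → X, (∀ n, x n ∈ S) → IsPseudoOrbit f δ x →
    ∃ z ∈ S, Traces f ε z x

/-- Non-wandering point. -/
def NonWanderingPt [TopologicalSpace X] (f : X → X) (x : X) : Prop :=
  ∀ U ∈ nhds x, ∃ k : ℕ, 1 ≤ k ∧ ∃ y ∈ U, f^[k] y ∈ U

/-- The (forward) orbit of a point. -/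
def orbitSet (f : X → X) (x : X) : Set X := Set.range fun n : ℕ => f^[n] x

/-- Recurrent point. -/
def RecurrentPt [TopologicalSpace X] (f : X → X) (x : X) : Prop :=
  ∀ U ∈ nhds x, ∃ k : ℕ, 1 ≤ k ∧ f^[k] x ∈ U

/-- Minimal point: every point of the orbit closure has `x` in its own orbit closure,
i.e. the orbit closure of `x` is a minimal set. -/
def MinimalPt [TopologicalSpace X] (f : X → X) (x : X) : Prop :=
  ∀ y ∈ closure (orbitSet f x), x ∈ closure (orbitSet f y)

/-- Regularly recurrent point. -/
def RegRecPt [TopologicalSpace X] (f : X → X) (x : X) : Prop :=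
  ∀ U ∈ nhds x, ∃ k : ℕ, 1 ≤ k ∧ ∀ n : ℕ, f^[k * n] x ∈ U

/-- Equicontinuity of the family of iterates of `f`. -/
def EquicontinuousMap [MetricSpace X] (f : X → X) : Prop :=
  ∀ ε > (0 : ℝ), ∃ δ > (0 : ℝ), ∀ x y : X, dist x y < δ →
    ∀ n : ℕ, dist (f^[n] x) (f^[n] y) < ε

/-- `u` is a sensitive point of the subsystem on `S`. -/
def SensitivePtOn [MetricSpace X] (f : X → X) (S : Set X) (u : X) : Prop :=
  ∃ δ > (0 : ℝ), ∀ U ∈ nhds u, ∃ n : ℕ, ∃ a ∈ U ∩ S, ∃ b ∈ U ∩ S,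
    dist (f^[n] a) (f^[n] b) > δ

/-- `u` is a sensitive point of `(X,f)`. -/
def SensitivePt [MetricSpace X] (f : X → X) (u : X) : Prop :=
  ∃ δ > (0 : ℝ), ∀ U ∈ nhds u, ∃ n : ℕ, ∃ a ∈ U, ∃ b ∈ U,
    dist (f^[n] a) (f^[n] b) > δ

/-- Topological transitivity. -/
def TopTransitive {Y : Type*} [TopologicalSpace Y] (g : Y → Y) : Prop :=
  ∀ U V : Set Y, IsOpen U → U.Nonempty → IsOpen V → V.Nonempty →
    ∃ n : ℕ, 1 ≤ n ∧ (g^[n] '' U ∩ V).Nonempty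

/-- Weak mixing: the product system is transitive. -/
def WeaklyMixing [TopologicalSpace X] (f : X → X) : Prop :=
  TopTransitive (fun p : X × X => (f p.1, f p.2))

/-- Strong mixing. -/
def StronglyMixing {Y : Type*} [TopologicalSpace Y] (g : Y → Y) : Prop :=
  ∀ U V : Set Y, IsOpen U → U.Nonempty → IsOpen V → V.Nonempty →
    ∃ N : ℕ, ∀ n ≥ N, (g^[n] '' U ∩ V).Nonempty

/-- The shift map on the full shift over `d` symbols. -/
def shiftMap (d : ℕ) : (ℕ → Fin d) → (ℕ → Fin d) := fun x n => x (n + 1)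

/-- `π` is a factor map from the subsystem `(Y, f^[m])` onto the full shift on `d` symbols. -/
def FactorOntoShift [TopologicalSpace X] (f : X → X) (m : ℕ) (Y : Set X) (d : ℕ)
    (π : X → (ℕ → Fin d)) : Prop :=
  ContinuousOn π Y ∧ π '' Y = Set.univ ∧ ∀ y ∈ Y, π (f^[m] y) = shiftMap d (π y)

section

variable [MetricSpace X] {f : X → X} {x : X}

theorem regRecPt_iff_forall_dist_lt :
    RegRecPt f x ↔ ∀ ε > 0, ∃ k : ℕ, 1 ≤ k ∧ ∀ n : ℕ, dist (f^[k * n] x) x < ε := by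
  refine Metric.nhds_basis_ball.forall_iff ?_
  rintro U V hUV ⟨k, hk, hU⟩
  exact ⟨k, hk, fun n => hUV (hU n)⟩

theorem EquicontinuousMap.recurrentPt (heq : EquicontinuousMap f) (hnw : NonWanderingPt f x) :
    RecurrentPt f x := by
  intro U hU
  obtain ⟨ε, hε, hball⟩ := Metric.mem_nhds_iff.mp hU
  obtain ⟨η, hη, hequi⟩ := heq (ε / 2) (half_pos hε)
  obtain ⟨k, hk, y, hy, hky⟩ :=
    hnw _ (Metric.ball_mem_nhds x (lt_min hη (half_pos hε)))
  refine ⟨k, hk, hball (Metric.mem_ball.mpr ?_)⟩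
  calc dist (f^[k] x) x ≤ dist (f^[k] x) (f^[k] y) + dist (f^[k] y) x := dist_triangle _ _ _
    _ < ε / 2 + ε / 2 :=
      add_lt_add (hequi x y ((Metric.mem_ball'.mp hy).trans_le (min_le_left _ _)) k)
        ((Metric.mem_ball.mp hky).trans_le (min_le_right _ _))
    _ = ε := add_halves ε

theorem isPseudoOrbit_iterate_mod {k : ℕ} {δ : ℝ} (hk : 0 < k) (hδ : 0 < δ)
    (hret : dist (f^[k] x) x < δ) : IsPseudoOrbit f δ fun n => f^[n % k] x := by
  intro n
  show dist (f (f^[n % k] x)) (f^[(n + 1) % k] x) < δ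
  rw [← iterate_succ_apply' f]
  rcases Nat.lt_or_eq_of_le (Nat.mod_lt n hk : n % k + 1 ≤ k) with hlt | hend
  · rw [Nat.add_mod, Nat.one_mod_eq_one.mpr (by omega), Nat.mod_eq_of_lt hlt, dist_self]
    exact hδ
  · have hwrap : (n + 1) % k = 0 :=
      Nat.mod_eq_zero_of_dvd
        ⟨n / k + 1, by rw [mul_add, mul_one]; have := Nat.mod_add_div n k; omega⟩
    rwa [hend, hwrap]

theorem HasShadowing.exists_forall_dist_iterate_mul_lt (hsh : HasShadowing f) {ε : ℝ}
    (hε : 0 < ε) : ∃ δ > 0, ∀ (x : X) (k : ℕ), 0 < k → dist (f^[k] x) x < δ →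
      ∃ z : X, ∀ n : ℕ, dist (f^[k * n] z) x < ε := by
  obtain ⟨δ, hδ, hshadow⟩ := hsh ε hε
  refine ⟨δ, hδ, fun x k hk hret => ?_⟩
  obtain ⟨z, hz⟩ := hshadow _ (isPseudoOrbit_iterate_mod hk hδ hret)
  refine ⟨z, fun n => ?_⟩
  simpa using hz (k * n)

end

theorem nonwandering_equicontinuous_shadowing_all_regrec_general [MetricSpace X]
    (f : X → X) (hnw : ∀ x : X, NonWanderingPt f x)
    (heq : EquicontinuousMap f) (hsh : HasShadowing f) :
    ∀ x : X, RegRecPt f x := by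
  intro x
  refine regRecPt_iff_forall_dist_lt.mpr fun ε hε => ?_
  obtain ⟨η, hη, hequi⟩ := heq (ε / 2) (half_pos hε)
  obtain ⟨δ, hδ, hshadow⟩ := hsh.exists_forall_dist_iterate_mul_lt (lt_min hη (half_pos hε))
  obtain ⟨k, hk, hret⟩ := heq.recurrentPt (hnw x) _ (Metric.ball_mem_nhds x hδ)
  obtain ⟨z, hz⟩ := hshadow x k hk hret
  have hzx : dist x z < η := by
    simpa [dist_comm] using (hz 0).trans_le (min_le_left _ _)
  refine ⟨k, hk, fun n => ?_⟩
  calc dist (f^[k * n] x) x ≤ dist (f^[k * n] x) (f^[k * n] z) + dist (f^[k * n] z) x :=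
        dist_triangle _ _ _
    _ < ε / 2 + ε / 2 := add_lt_add (hequi x z hzx _) ((hz n).trans_le (min_le_right _ _))
    _ = ε := add_halves ε

theorem nonwandering_equicontinuous_shadowing_all_regrec [MetricSpace X] [CompactSpace X]
    (f : X → X) (hf : Continuous f) (hnw : ∀ x : X, NonWanderingPt f x)
    (heq : EquicontinuousMap f) (hsh : HasShadowing f) :
    ∀ x : X, RegRecPt f x :=
  nonwandering_equicontinuous_shadowing_all_regrec_general f hnw heq hsh
end

section
/- Let (X,f) be a dynamical system. If there exist a positive integer m and a closed f^m-invariant subset Y of X such that (Y, f^m) admits a factor map onto the full shift ({0,1}^ℕ, σ), then there is a point in Y that is recurrent for f but not minimal for f. -/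
open Set Function

variable {X : Type*}

/-!
The sequence `ω` that equals `1` exactly at the integers whose ternary digits avoid `1` is
recurrent under the shift (its prefix of length `3 ^ J` reappears at `2 * 3 ^ J`) but not minimal
(a block of `3 ^ J` zeros starts at `3 ^ J`, so the fixed point `0^∞` lies in its orbit closure).

Recurrence lifts through the factor map: take `K` minimal among the closed `f^m`-invariant subsets
of `Y` meeting the fibre over `ω`, and `x ∈ K` over `ω`. The orbit closure of `f^m x` is again
such a set, since its image is the orbit closure of `σ ω`, which contains `ω`; hence it is `K` and
contains `x`.

The lift is not minimal for `f`: an `f`-minimal set is a finite union of images `f^j E` of an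
`f^m`-minimal set `E`, so a minimal point of `f` is minimal for `f^m`, and minimality passes to
the factor.
-/

open Topology

variable {Z : Type*}

theorem mapsTo_orbitSet (g : X → X) (x : X) : MapsTo g (orbitSet g x) (orbitSet g x) := by
  rintro _ ⟨n, rfl⟩
  exact ⟨n + 1, iterate_succ_apply' g n x⟩

theorem orbitSet_subset {g : X → X} {K : Set X} (hK : MapsTo g K K) {x : X} (hx : x ∈ K) :
    orbitSet g x ⊆ K := by
  rintro _ ⟨n, rfl⟩
  exact hK.iterate n hx

theorem orbitSet_iterate_subset (f : X → X) (m : ℕ) (x : X) :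
    orbitSet f^[m] x ⊆ orbitSet f x := by
  rintro _ ⟨n, rfl⟩
  exact ⟨m * n, congrFun (iterate_mul f m n) x⟩

theorem apply_iterate_eq_of_semiconj {g : X → X} {Y : Set X} {π : X → Z} {S : Z → Z}
    (hYg : MapsTo g Y Y) (hπS : ∀ y ∈ Y, π (g y) = S (π y)) (n : ℕ) :
    ∀ y ∈ Y, π (g^[n] y) = S^[n] (π y) := by
  induction n with
  | zero => exact fun _ _ => rfl
  | succ n ih =>
    intro y hy
    rw [iterate_succ_apply, iterate_succ_apply, ih (g y) (hYg hy), hπS y hy]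

theorem image_orbitSet_of_semiconj {g : X → X} {Y : Set X} {π : X → Z} {S : Z → Z}
    (hYg : MapsTo g Y Y) (hπS : ∀ y ∈ Y, π (g y) = S (π y)) {x : X} (hx : x ∈ Y) :
    π '' orbitSet g x = orbitSet S (π x) := by
  rw [orbitSet, orbitSet, ← range_comp]
  exact congrArg range (funext fun n => apply_iterate_eq_of_semiconj hYg hπS n x hx)

section Dynamics

variable [TopologicalSpace X]

theorem mapsTo_closure_orbitSet {g : X → X} (hg : Continuous g) (x : X) :
    MapsTo g (closure (orbitSet g x)) (closure (orbitSet g x)) :=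
  (mapsTo_orbitSet g x).closure hg

theorem closure_orbitSet_subset {g : X → X} {K : Set X} (hKc : IsClosed K) (hK : MapsTo g K K)
    {x : X} (hx : x ∈ K) : closure (orbitSet g x) ⊆ K :=
  closure_minimal (orbitSet_subset hK hx) hKc

theorem recurrentPt_iff_mem_closure_orbitSet {g : X → X} {x : X} :
    RecurrentPt g x ↔ x ∈ closure (orbitSet g (g x)) := by
  rw [mem_closure_iff_nhds]
  constructor
  · intro h U hU
    obtain ⟨k, hk, hkU⟩ := h U hU
    obtain ⟨n, rfl⟩ := Nat.exists_eq_add_of_le' hk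
    exact ⟨_, hkU, n, (iterate_succ_apply g n x).symm⟩
  · intro h U hU
    obtain ⟨_, hU, n, rfl⟩ := h U hU
    exact ⟨n + 1, Nat.le_add_left 1 n, by rwa [iterate_succ_apply]⟩

theorem RecurrentPt.of_iterate {f : X → X} {m : ℕ} (hm : 0 < m) {x : X}
    (h : RecurrentPt f^[m] x) : RecurrentPt f x := by
  intro U hU
  obtain ⟨k, hk, hkU⟩ := h U hU
  exact ⟨m * k, Nat.mul_pos hm hk, by rwa [iterate_mul]⟩

def IsMinimalSet (g : X → X) (E : Set X) : Prop :=
  Minimal (fun A : Set X => IsClosed A ∧ MapsTo g A A ∧ A.Nonempty) E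

theorem exists_minimal_isClosed_mapsTo_inter_nonempty [CompactSpace X] {g : X → X} {F D : Set X}
    (hF : IsClosed F) (hD : IsClosed D) (hDg : MapsTo g D D) (hDF : (D ∩ F).Nonempty) :
    ∃ K ⊆ D, Minimal (fun K : Set X => IsClosed K ∧ MapsTo g K K ∧ (K ∩ F).Nonempty) K := by
  refine zorn_superset_nonempty _ (fun c hc hchain hcne => ?_) D ⟨hD, hDg, hDF⟩
  have : Nonempty c := hcne.coe_sort
  have hchain' : Directed (· ⊇ ·) (fun K : c => (K : Set X)) :=
    DirectedOn.directed_val (IsChain.directedOn hchain.symm)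
  have hdir : Directed (· ⊇ ·) (fun K : c => (K : Set X) ∩ F) := fun K L => by
    obtain ⟨M, hMK, hML⟩ := hchain' K L
    exact ⟨M, inter_subset_inter_left F hMK, inter_subset_inter_left F hML⟩
  refine ⟨⋂₀ c, ⟨isClosed_sInter fun K hK => (hc hK).1, fun x hx => ?_, ?_⟩,
    fun K hK => sInter_subset_of_mem hK⟩
  · exact mem_sInter.2 fun K hK => (hc hK).2.1 (mem_sInter.1 hx K hK)
  · rw [sInter_eq_iInter, iInter_inter]
    exact IsCompact.nonempty_iInter_of_directed_nonempty_isCompact_isClosed _ hdir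
      (fun K => (hc K.2).2.2) (fun K => ((hc K.2).1.inter hF).isCompact)
      (fun K => (hc K.2).1.inter hF)

theorem exists_isMinimalSet_subset [CompactSpace X] {g : X → X} {D : Set X} (hD : IsClosed D)
    (hDg : MapsTo g D D) (hDne : D.Nonempty) : ∃ E ⊆ D, IsMinimalSet g E := by
  simpa only [IsMinimalSet, inter_univ] using
    exists_minimal_isClosed_mapsTo_inter_nonempty isClosed_univ hD hDg (by rwa [inter_univ])

theorem IsMinimalSet.minimalPt {g : X → X} (hg : Continuous g) {E : Set X}
    (hE : IsMinimalSet g E) {x : X} (hx : x ∈ E) : MinimalPt g x := by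
  intro y hy
  have hyE : y ∈ E := closure_orbitSet_subset hE.prop.1 hE.prop.2.1 hx hy
  exact hE.le_of_le ⟨isClosed_closure, mapsTo_closure_orbitSet hg y, y, subset_closure ⟨0, rfl⟩⟩
    (closure_orbitSet_subset hE.prop.1 hE.prop.2.1 hyE) hx

theorem IsMinimalSet.image_iterate [CompactSpace X] [T2Space X] {f : X → X} (hf : Continuous f)
    {m j : ℕ} (hj : j ≤ m) {E : Set X} (hE : IsMinimalSet f^[m] E) :
    IsMinimalSet f^[m] (f^[j] '' E) := by
  have hclosed : ∀ k {A : Set X}, IsClosed A → IsClosed (f^[k] '' A) :=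
    fun k _ hA => (hA.isCompact.image (hf.iterate k)).isClosed
  have hmapsTo : ∀ k {A : Set X}, MapsTo f^[m] A A → MapsTo f^[m] (f^[k] '' A) (f^[k] '' A) :=
    fun k _ hA => Semiconj.mapsTo_image (Commute.iterate_iterate_self f k m) hA
  obtain ⟨hEc, hEg, hEne⟩ := hE.prop
  refine ⟨⟨hclosed j hEc, hmapsTo j hEg, hEne.image _⟩, fun A ⟨hAc, hAg, hAne⟩ hAE => ?_⟩
  have hiter : f^[j] ∘ f^[m - j] = f^[m] := by rw [← iterate_add, Nat.add_sub_cancel' hj]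
  -- `f^[m - j]` carries `A` back into `E`, where minimality of `E` applies.
  have hBE : f^[m - j] '' A ⊆ E := by
    rintro _ ⟨_, ha, rfl⟩
    obtain ⟨e, he, rfl⟩ := hAE ha
    rw [← comp_apply (f := f^[m - j]), ← iterate_add, Nat.sub_add_cancel hj]
    exact hEg he
  have hEB := hE.le_of_le ⟨hclosed _ hAc, hmapsTo _ hAg, hAne.image _⟩ hBE
  calc f^[j] '' E ⊆ f^[j] '' (f^[m - j] '' A) := image_mono hEB
    _ = f^[m] '' A := by rw [image_image, ← hiter]; rfl
    _ ⊆ A := hAg.image_subset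

theorem MinimalPt.iterate [CompactSpace X] [T2Space X] {f : X → X} (hf : Continuous f) {m : ℕ}
    (hm : 0 < m) {x : X} (h : MinimalPt f x) : MinimalPt f^[m] x := by
  obtain ⟨E, hEC, hE⟩ := exists_isMinimalSet_subset isClosed_closure
    (mapsTo_closure_orbitSet (hf.iterate m) x) ⟨x, subset_closure ⟨0, rfl⟩⟩
  let L := ⋃ j < m, f^[j] '' E
  have hLc : IsClosed L := (finite_lt_nat m).isClosed_biUnion fun j _ =>
    (hE.prop.1.isCompact.image (hf.iterate j)).isClosed
  have hLf : MapsTo f L L := by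
    intro y hy
    obtain ⟨j, hj, e, he, rfl⟩ := mem_iUnion₂.1 hy
    rw [← iterate_succ_apply' f j e]
    rcases (Nat.succ_le_of_lt hj).lt_or_eq with hj' | hj'
    · exact mem_iUnion₂.2 ⟨j + 1, hj', e, he, rfl⟩
    · rw [hj']
      exact mem_iUnion₂.2 ⟨0, hm, f^[m] e, hE.prop.2.1 he, rfl⟩
  obtain ⟨e, he⟩ := hE.prop.2.2
  have hxe : x ∈ closure (orbitSet f e) :=
    h e (closure_mono (orbitSet_iterate_subset f m x) (hEC he))
  obtain ⟨j, hj, hx⟩ := mem_iUnion₂.1 <|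
    closure_orbitSet_subset hLc hLf (mem_iUnion₂.2 ⟨0, hm, e, he, rfl⟩) hxe
  exact (hE.image_iterate hf hj.le).minimalPt (hf.iterate m) hx

end Dynamics

section Factor

variable [TopologicalSpace X] [CompactSpace X] [TopologicalSpace Z] [T2Space Z]
  {g : X → X} {Y : Set X} {π : X → Z} {S : Z → Z}

theorem image_closure_orbitSet_of_semiconj (hY : IsClosed Y) (hYg : MapsTo g Y Y)
    (hπ : ContinuousOn π Y) (hπS : ∀ y ∈ Y, π (g y) = S (π y)) {x : X} (hx : x ∈ Y) :
    π '' closure (orbitSet g x) = closure (orbitSet S (π x)) := by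
  rw [← image_orbitSet_of_semiconj hYg hπS hx]
  exact image_closure_of_isCompact isClosed_closure.isCompact
    (hπ.mono (closure_orbitSet_subset hY hYg hx))

theorem MinimalPt.image_of_semiconj (hY : IsClosed Y) (hYg : MapsTo g Y Y)
    (hπ : ContinuousOn π Y) (hπS : ∀ y ∈ Y, π (g y) = S (π y)) {x : X} (hx : x ∈ Y)
    (h : MinimalPt g x) : MinimalPt S (π x) := by
  intro w hw
  rw [← image_closure_orbitSet_of_semiconj hY hYg hπ hπS hx] at hw
  obtain ⟨y, hy, rfl⟩ := hw
  rw [← image_closure_orbitSet_of_semiconj hY hYg hπ hπS (closure_orbitSet_subset hY hYg hx hy)]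
  exact mem_image_of_mem π (h y hy)

theorem RecurrentPt.exists_lift {z : Z} (hz : RecurrentPt S z) (hg : Continuous g)
    (hY : IsClosed Y) (hYg : MapsTo g Y Y) (hπ : ContinuousOn π Y)
    (hπS : ∀ y ∈ Y, π (g y) = S (π y)) (hzY : z ∈ π '' Y) : ∃ x ∈ Y, π x = z ∧ RecurrentPt g x := by
  have hfibre : IsClosed (Y ∩ π ⁻¹' {z}) := hπ.preimage_isClosed_of_isClosed hY isClosed_singleton
  have hYz : (Y ∩ (Y ∩ π ⁻¹' {z})).Nonempty := by
    obtain ⟨x, hx, rfl⟩ := hzY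
    exact ⟨x, hx, hx, mem_singleton _⟩
  obtain ⟨K, hKY, hK⟩ := exists_minimal_isClosed_mapsTo_inter_nonempty hfibre hY hYg hYz
  obtain ⟨hKc, hKg, x, hxK, hxY, hxz : π x = z⟩ := hK.prop
  refine ⟨x, hxY, hxz, recurrentPt_iff_mem_closure_orbitSet.2 ?_⟩
  have hsub : closure (orbitSet g (g x)) ⊆ K := closure_orbitSet_subset hKc hKg (hKg hxK)
  have hz' : z ∈ π '' closure (orbitSet g (g x)) := by
    rw [image_closure_orbitSet_of_semiconj hY hYg hπ hπS (hYg hxY), hπS x hxY, hxz]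
    exact recurrentPt_iff_mem_closure_orbitSet.1 hz
  obtain ⟨y, hy, hyz⟩ := hz'
  exact hK.le_of_le ⟨isClosed_closure, mapsTo_closure_orbitSet hg _, y, hy, hKY (hsub hy), hyz⟩
    hsub hxK

end Factor

section Shift

theorem shiftMap_iterate_apply {d : ℕ} (u : ℕ → Fin d) (k n : ℕ) :
    (shiftMap d)^[k] u n = u (n + k) := by
  induction k generalizing u with
  | zero => rfl
  | succ k ih => rw [iterate_succ_apply, ih]; rfl

theorem orbitSet_shiftMap_const {d : ℕ} (a : Fin d) :
    orbitSet (shiftMap d) (fun _ => a) = {fun _ => a} :=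
  eq_singleton_iff_unique_mem.2 ⟨⟨0, rfl⟩, by
    rintro _ ⟨k, rfl⟩
    exact funext fun n => shiftMap_iterate_apply _ k n⟩

theorem exists_cylinder_subset_of_mem_nhds {E : ℕ → Type*} [∀ n, TopologicalSpace (E n)]
    [∀ n, DiscreteTopology (E n)] {u : ∀ n, E n} {U : Set (∀ n, E n)} (hU : U ∈ 𝓝 u) :
    ∃ J, PiNat.cylinder u J ⊆ U := by
  obtain ⟨_, ⟨v, J, rfl⟩, hu, hsub⟩ := (PiNat.isTopologicalBasis_cylinders E).mem_nhds_iff.1 hU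
  exact ⟨J, PiNat.mem_cylinder_iff_eq.1 hu ▸ hsub⟩

theorem mem_digits_add_pow_mul {b i j d a : ℕ} (hb : 1 < b) (hi : i < b ^ j) (hd : 0 < d)
    (ha : a ≠ 0) : a ∈ Nat.digits b (i + b ^ j * d) ↔ a ∈ Nat.digits b i ∨ a ∈ Nat.digits b d := by
  have hlen : (Nat.digits b i).length ≤ j := (Nat.digits_length_le_iff hb i).2 hi
  rw [← Nat.add_sub_cancel' hlen, ← Nat.digits_append_zeroes_append_digits hb hd]
  simp [List.mem_replicate, ha]

def cantorSeq (n : ℕ) : Fin 2 := if 1 ∈ Nat.digits 3 n then 0 else 1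

theorem cantorSeq_add_pow_mul_two {i j : ℕ} (hi : i < 3 ^ j) :
    cantorSeq (i + 3 ^ j * 2) = cantorSeq i := by
  simp only [cantorSeq, mem_digits_add_pow_mul (by norm_num) hi two_pos one_ne_zero]
  simp

theorem cantorSeq_add_pow {i j : ℕ} (hi : i < 3 ^ j) : cantorSeq (i + 3 ^ j) = 0 := by
  have h := mem_digits_add_pow_mul (by norm_num) hi one_pos one_ne_zero
  rw [mul_one] at h
  rw [cantorSeq, if_pos (h.2 (Or.inr (by simp)))]

theorem recurrentPt_cantorSeq : RecurrentPt (shiftMap 2) cantorSeq := by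
  intro U hU
  obtain ⟨J, hJ⟩ := exists_cylinder_subset_of_mem_nhds hU
  refine ⟨3 ^ J * 2, Nat.one_le_iff_ne_zero.2 (by positivity),
    hJ (PiNat.mem_cylinder_iff.2 fun i hi => ?_)⟩
  rw [shiftMap_iterate_apply, cantorSeq_add_pow_mul_two (hi.trans (Nat.lt_pow_self (by norm_num)))]

theorem const_zero_mem_closure_orbitSet_cantorSeq :
    (fun _ => 0 : ℕ → Fin 2) ∈ closure (orbitSet (shiftMap 2) cantorSeq) := by
  rw [mem_closure_iff_nhds]
  intro U hU
  obtain ⟨J, hJ⟩ := exists_cylinder_subset_of_mem_nhds hU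
  refine ⟨(shiftMap 2)^[3 ^ J] cantorSeq, hJ (PiNat.mem_cylinder_iff.2 fun i hi => ?_), 3 ^ J, rfl⟩
  rw [shiftMap_iterate_apply, cantorSeq_add_pow (hi.trans (Nat.lt_pow_self (by norm_num)))]

theorem not_minimalPt_cantorSeq : ¬ MinimalPt (shiftMap 2) cantorSeq := by
  intro h
  have h0 := h _ const_zero_mem_closure_orbitSet_cantorSeq
  rw [orbitSet_shiftMap_const, closure_singleton] at h0
  simpa [cantorSeq] using congrFun h0 0

end Shift

theorem shift_factor_gives_recurrent_nonminimal [MetricSpace X] [CompactSpace X]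
    (f : X → X) (hf : Continuous f) (m : ℕ) (hm : 1 ≤ m)
    (Y : Set X) (hYc : IsClosed Y) (hYinv : Set.MapsTo f^[m] Y Y)
    (π : X → (ℕ → Fin 2)) (hπ : FactorOntoShift f m Y 2 π) :
    ∃ x ∈ Y, RecurrentPt f x ∧ ¬ MinimalPt f x := by
  obtain ⟨hπc, hπY, hπS⟩ := hπ
  obtain ⟨x, hxY, hπx, hrec⟩ := recurrentPt_cantorSeq.exists_lift (hf.iterate m) hYc hYinv hπc hπS
    (hπY ▸ mem_univ _)
  refine ⟨x, hxY, hrec.of_iterate hm, fun hmin => not_minimalPt_cantorSeq ?_⟩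
  rw [← hπx]
  exact (hmin.iterate hf hm).image_of_semiconj hYc hYinv hπc hπS hxY
end

section
/- Let (X,f) be a dynamical system with the shadowing property. If there exists a minimal point that is not regularly recurrent, then (X,f) has positive topological entropy. -/
open Set Function

variable {X : Type*}

/-!
A minimal point `x` lies in its own `ω`-limit set under every power `f^[k]`. If `x` is not
regularly recurrent, some ball `B(x, r)` is left by the `f^[q]`-orbit of `x` for every `q ≥ 1`.
Taking a `δ`-return time `q` of `x`, a time `q * n` at which the orbit is outside the ball and a
later `f^[q]`-return time, we get a point `v` at distance `≥ r` from `x` and `δ`-chains of one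
common length `L` between any two of `x`, `v`. Shadowing the `2 ^ m` concatenations of these
chains gives `2 ^ m` orbits that are `r / 2`-separated before time `L * m`, so the entropy is at
least `log 2 / L`.
-/

open Filter Topology

section OmegaLimit

-- `MapClusterPt a atTop fun n ↦ g^[n] b` says that `a` is in the `ω`-limit set `ω_g(b)`.
variable [TopologicalSpace X] {g h : X → X} {a b c : X}

theorem MapClusterPt.apply_of_commute (hh : Continuous h) (hgh : Function.Commute g h)
    (ha : MapClusterPt a atTop fun n ↦ g^[n] b) : MapClusterPt (h a) atTop fun n ↦ g^[n] (h b) := by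
  convert ha.continuousAt_comp hh.continuousAt using 2 with n
  exact (hgh.iterate_left n).eq b

theorem MapClusterPt.of_iterate_apply {j : ℕ} (ha : MapClusterPt a atTop fun n ↦ g^[n] (g^[j] b)) :
    MapClusterPt a atTop fun n ↦ g^[n] b := by
  refine MapClusterPt.of_comp (tendsto_add_atTop_nat j) ?_
  simpa only [Function.comp_def, Function.iterate_add_apply] using ha

theorem MapClusterPt.mem_closure_range {u : ℕ → X} (ha : MapClusterPt a atTop u) :
    a ∈ closure (range u) :=
  mem_closure_iff_clusterPt.mpr (ClusterPt.mono ha (le_principal_iff.mpr range_mem_map))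

theorem MapClusterPt.of_mem_closure_orbit (hg : Continuous g)
    (ha : MapClusterPt a atTop fun n ↦ g^[n] b) (hc : c ∈ closure (range fun n ↦ g^[n] a)) :
    MapClusterPt c atTop fun n ↦ g^[n] b := by
  refine closure_minimal ?_ isClosed_setOfPred_clusterPt hc
  rintro _ ⟨m, rfl⟩
  exact (ha.apply_of_commute (hg.iterate m) (Function.Commute.self_iterate g m)).of_iterate_apply

theorem MapClusterPt.trans (hg : Continuous g) (ha : MapClusterPt a atTop fun n ↦ g^[n] b)
    (hb : MapClusterPt b atTop fun n ↦ g^[n] c) : MapClusterPt a atTop fun n ↦ g^[n] c :=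
  hb.of_mem_closure_orbit hg ha.mem_closure_range

end OmegaLimit

theorem MinimalPt.mapClusterPt_iterate [TopologicalSpace X] [CompactSpace X] {f : X → X}
    (hf : Continuous f) {x : X} (hx : MinimalPt f x) {k : ℕ} (hk : 0 < k) :
    MapClusterPt x atTop fun n ↦ (f^[k])^[n] x := by
  have hg : Continuous f^[k] := hf.iterate k
  have hcomm : ∀ j, Function.Commute f^[k] f^[j] := Function.Commute.iterate_iterate_self f k
  obtain ⟨s, -, hs⟩ := isCompact_univ.exists_mapClusterPt (f := atTop)
    (u := fun n ↦ (f^[k])^[n] x) (by simp)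
  have hsx : s ∈ closure (orbitSet f x) := by
    refine closure_mono ?_ hs.mem_closure_range
    rintro _ ⟨n, rfl⟩
    exact ⟨k * n, by simp only [iterate_mul]⟩
  have hsplit : orbitSet f s ⊆ ⋃ j : Fin k, range fun n ↦ (f^[k])^[n] (f^[j] s) := by
    rintro _ ⟨i, rfl⟩
    refine mem_iUnion.mpr ⟨⟨i % k, Nat.mod_lt i hk⟩, i / k, ?_⟩
    simp only [← iterate_mul, ← iterate_add_apply, Nat.div_add_mod]
  have hxs := closure_mono hsplit (hx s hsx)
  rw [closure_iUnion_of_finite] at hxs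
  obtain ⟨j, hj⟩ := mem_iUnion.mp hxs
  have hj' : MapClusterPt x atTop fun n ↦ (f^[k])^[n] (f^[j] x) :=
    (hs.apply_of_commute (hf.iterate j) (hcomm j)).of_mem_closure_orbit hg hj
  -- iterating `x ∈ ω_{f^k}(f^j x)` gives `x ∈ ω_{f^k}(f^(j * k) x) = ω_{f^k}(x)`
  have hjm : ∀ m, MapClusterPt x atTop fun n ↦ (f^[k])^[n] (f^[j * (m + 1)] x) := by
    intro m
    induction m with
    | zero => simpa using hj'
    | succ m ih =>
      have := ih.apply_of_commute (hf.iterate j) (hcomm j)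
      rw [← iterate_add_apply, show j + j * (m + 1) = j * (m + 1 + 1) by ring] at this
      exact hj'.trans hg this
  have := hjm (k - 1)
  rw [Nat.sub_add_cancel hk, mul_comm, iterate_mul] at this
  exact this.of_iterate_apply

section Chains

variable [MetricSpace X] {f : X → X} {δ : ℝ} {a b c : X} {m n : ℕ}

def PseudoChain (f : X → X) (δ : ℝ) (n : ℕ) (a b : X) : Prop :=
  ∃ y : ℕ → X, y 0 = a ∧ y n = b ∧ ∀ i < n, dist (f (y i)) (y (i + 1)) < δ

theorem pseudoChain_of_dist_iterate_lt (hn : 0 < n) (h : dist (f^[n] a) b < δ) :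
    PseudoChain f δ n a b := by
  have hδ : 0 < δ := dist_nonneg.trans_lt h
  refine ⟨fun i ↦ if i < n then f^[i] a else b, by simp [hn], by simp, fun i hi ↦ ?_⟩
  simp only [hi, if_true, ← iterate_succ_apply' f i a]
  rcases (Nat.succ_le_of_lt hi).lt_or_eq with hi' | rfl
  · simpa [hi'] using hδ
  · simpa using h

theorem PseudoChain.append (hab : PseudoChain f δ m a b) (hbc : PseudoChain f δ n b c) :
    PseudoChain f δ (m + n) a c := by
  obtain ⟨y, hy0, hym, hy⟩ := hab
  obtain ⟨z, hz0, hzn, hz⟩ := hbc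
  refine ⟨fun i ↦ if i ≤ m then y i else z (i - m), by simp [hy0], ?_, fun i hi ↦ ?_⟩
  · rcases n.eq_zero_or_pos with rfl | hn
    · simp [hym, ← hz0, hzn]
    · simp [show ¬ m + n ≤ m by omega, hzn]
  · rcases lt_trichotomy i m with him | rfl | him
    · simpa [him.le, Nat.succ_le_of_lt him] using hy i him
    · simpa [hym, ← hz0] using hz 0 (by omega)
    · simpa [show ¬ i ≤ m by omega, show ¬ i + 1 ≤ m by omega, show i + 1 - m = i - m + 1 by omega]
        using hz (i - m) (by omega)

theorem PseudoChain.iterate (h : PseudoChain f δ n a a) (m : ℕ) : PseudoChain f δ (n * m) a a := by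
  induction m with
  | zero => exact ⟨fun _ ↦ a, rfl, rfl, by simp⟩
  | succ m ih => simpa [Nat.mul_succ] using ih.append h

end Chains

theorem exists_pseudoOrbit_of_pseudoChain [MetricSpace X] {f : X → X} {δ : ℝ} {ι : Type*}
    {p : ι → X} {L : ℕ} (hL : 0 < L) (hp : ∀ i j, PseudoChain f δ L (p i) (p j)) (w : ℕ → ι) :
    ∃ y : ℕ → X, IsPseudoOrbit f δ y ∧ ∀ n, y (L * n) = p (w n) := by
  choose c hc0 hcL hc using hp
  refine ⟨fun t ↦ c (w (t / L)) (w (t / L + 1)) (t % L), fun t ↦ ?_,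
    fun n ↦ by simp [Nat.mul_div_cancel_left n hL, hc0]⟩
  have ht := Nat.mod_add_div t L
  have hs := Nat.mod_lt t hL
  suffices c (w ((t + 1) / L)) (w ((t + 1) / L + 1)) ((t + 1) % L) =
      c (w (t / L)) (w (t / L + 1)) (t % L + 1) by
    simp only [this]; exact hc _ _ _ hs
  rcases (show t % L + 1 ≤ L from hs).lt_or_eq with h | h
  · have e : t + 1 = (t % L + 1) + L * (t / L) := by omega
    rw [e, Nat.add_mul_div_left _ _ hL, Nat.div_eq_of_lt h, Nat.add_mul_mod_self_left,
      Nat.mod_eq_of_lt h, zero_add]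
  · have e : t + 1 = L * (t / L + 1) := by rw [Nat.mul_succ]; omega
    rw [e, Nat.mul_div_cancel_left _ hL, Nat.mul_mod_right, hc0, h, hcL]

section Recurrence

variable [MetricSpace X] [CompactSpace X] {f : X → X} {x : X}

theorem MinimalPt.exists_dist_iterate_mul_lt (hf : Continuous f) (hx : MinimalPt f x) {k : ℕ}
    (hk : 0 < k) {δ : ℝ} (hδ : 0 < δ) (N : ℕ) : ∃ n ≥ N, dist (f^[k * n] x) x < δ := by
  have := mapClusterPt_iff_frequently.mp (hx.mapClusterPt_iterate hf hk) _
    (Metric.ball_mem_nhds x hδ)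
  obtain ⟨n, hn, hnx⟩ := frequently_atTop.mp this N
  exact ⟨n, hn, by rwa [iterate_mul]⟩

theorem MinimalPt.exists_far_pseudoChains (hf : Continuous f) (hx : MinimalPt f x)
    (hnr : ¬ RegRecPt f x) :
    ∃ r > 0, ∀ δ > 0, ∃ v : X, ∃ L > 0, r ≤ dist x v ∧
      ∀ a ∈ ({x, v} : Set X), ∀ b ∈ ({x, v} : Set X), PseudoChain f δ L a b := by
  simp only [RegRecPt, not_forall, not_exists, not_and] at hnr
  obtain ⟨U, hU, hesc⟩ := hnr
  obtain ⟨r, hr, hball⟩ := Metric.mem_nhds_iff.mp hU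
  refine ⟨r, hr, fun δ hδ ↦ ?_⟩
  obtain ⟨q, hq, hqx⟩ := hx.exists_dist_iterate_mul_lt hf one_pos hδ 1
  rw [one_mul] at hqx
  obtain ⟨n, hn⟩ := hesc q hq
  have hn0 : 0 < n := Nat.pos_of_ne_zero (by rintro rfl; exact hn (mem_of_mem_nhds hU))
  obtain ⟨t, ht, htx⟩ := hx.exists_dist_iterate_mul_lt hf hq hδ (n + 1)
  have hL : q * (t - n) + q * n = q * t := by rw [← mul_add, Nat.sub_add_cancel (by omega)]
  have loop : PseudoChain f δ q x x := pseudoChain_of_dist_iterate_lt hq hqx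
  have xv : PseudoChain f δ (q * n) x (f^[q * n] x) :=
    pseudoChain_of_dist_iterate_lt (Nat.mul_pos hq hn0) (by simpa using hδ)
  have vx : PseudoChain f δ (q * (t - n)) (f^[q * n] x) x :=
    pseudoChain_of_dist_iterate_lt (Nat.mul_pos hq (by omega)) (by rwa [← iterate_add_apply, hL])
  refine ⟨f^[q * n] x, q * t, Nat.mul_pos hq (by omega), ?_, ?_⟩
  · rw [dist_comm]
    exact not_lt.mp fun h ↦ hn (hball (Metric.mem_ball.mpr h))
  simp only [mem_insert_iff, mem_singleton_iff]
  rintro a (rfl | rfl) b (rfl | rfl)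
  · exact pseudoChain_of_dist_iterate_lt (Nat.mul_pos hq (by omega)) htx
  · exact hL ▸ (loop.iterate (t - n)).append xv
  · exact hL ▸ vx.append (loop.iterate n)
  · exact hL ▸ vx.append xv

end Recurrence

section Entropy

open Dynamics
open scoped ENNReal

variable {f : X → X}

theorem netEntropyEntourage_pos_of_two_pow_le {F : Set X} {U : SetRel X X} {L : ℕ} (hL : L ≠ 0)
    (h : ∀ m, (2 : ℕ∞) ^ m ≤ netMaxcard f F U (L * m)) : 0 < netEntropyEntourage f F U := by
  have hmono : Monotone fun n ↦ (netMaxcard f F U n : ℝ≥0∞) :=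
    ENat.toENNReal_mono.comp (netMaxcard_monotone_time f F U)
  have hlog : ENNReal.log 2 ≤ L * netEntropyEntourage f F U := by
    rw [netEntropyEntourage, ← hmono.expGrowthSup_comp_mul hL, ← ExpGrowth.expGrowthSup_pow]
    exact ExpGrowth.expGrowthSup_monotone fun m ↦ by simpa using ENat.toENNReal_mono (h m)
  by_contra! hle
  have : (L : EReal) * netEntropyEntourage f F U ≤ 0 :=
    EReal.mul_nonpos_iff.mpr (Or.inl ⟨by positivity, hle⟩)
  have h2 : (0 : EReal) < ENNReal.log 2 := ENNReal.zero_lt_log_iff.mpr ENNReal.one_lt_two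
  exact (h2.trans_le (hlog.trans this)).false

variable [MetricSpace X]

theorem card_le_netMaxcard_of_separated {ι : Type*} [Fintype ι] {z : ι → X} {ε : ℝ} (hε : 0 < ε)
    {N : ℕ} (hz : Pairwise fun i j ↦ ∃ n < N, ε ≤ dist (f^[n] (z i)) (f^[n] (z j))) :
    (Fintype.card ι : ℕ∞) ≤ netMaxcard f univ {p : X × X | dist p.1 p.2 < ε / 2} N := by
  classical
  have hinj : Injective z := fun i j hij ↦ by
    by_contra hne
    obtain ⟨n, -, hn⟩ := hz hne
    rw [hij, dist_self] at hn
    linarith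
  have hnet : IsDynNetIn f univ {p : X × X | dist p.1 p.2 < ε / 2} N (Finset.univ.image z) := by
    refine ⟨subset_univ _, ?_⟩
    simp only [Finset.coe_image, Finset.coe_univ, image_univ]
    rintro _ ⟨i, rfl⟩ _ ⟨j, rfl⟩ hij
    obtain ⟨n, hn, hsep⟩ := hz fun h ↦ hij (congrArg z h)
    refine disjoint_left.mpr fun y hi hj ↦ ?_
    have hi : dist (f^[n] (z i)) (f^[n] y) < ε / 2 := (mem_ball_dynEntourage.mp hi) n hn
    have hj : dist (f^[n] (z j)) (f^[n] y) < ε / 2 := (mem_ball_dynEntourage.mp hj) n hn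
    linarith [dist_triangle_right (f^[n] (z i)) (f^[n] (z j)) (f^[n] y)]
  calc (Fintype.card ι : ℕ∞) = (Finset.univ.image z).card := by
        rw [Finset.card_image_of_injective _ hinj, Finset.card_univ]
    _ ≤ _ := hnet.card_le_netMaxcard

theorem coverEntropy_pos_of_separated_words {L : ℕ} (hL : 0 < L) {ε : ℝ} (hε : 0 < ε)
    {z : (ℕ → Bool) → X}
    (hz : ∀ w w' i, w i ≠ w' i → ε < dist (f^[L * i] (z w)) (f^[L * i] (z w'))) :
    0 < coverEntropy f univ := by
  refine (netEntropyEntourage_pos_of_two_pow_le hL.ne' fun m ↦ ?_).trans_le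
    (netEntropyEntourage_le_coverEntropy f univ (Metric.dist_mem_uniformity (half_pos hε)))
  let pad : (Fin m → Bool) → ℕ → Bool := fun w i ↦ if h : i < m then w ⟨i, h⟩ else false
  have hsep : Pairwise fun w w' : Fin m → Bool ↦
      ∃ n < L * m, ε ≤ dist (f^[n] (z (pad w))) (f^[n] (z (pad w'))) := by
    intro w w' hww'
    obtain ⟨i, hi⟩ := Function.ne_iff.mp hww'
    exact ⟨L * i, Nat.mul_lt_mul_of_pos_left i.isLt hL, (hz _ _ i (by simpa [pad] using hi)).le⟩
  simpa using card_le_netMaxcard_of_separated hε hsep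

theorem HasShadowing.exists_separated_words (hsh : HasShadowing f) {x : X} {r : ℝ} (hr : 0 < r)
    (hch : ∀ δ > 0, ∃ v : X, ∃ L > 0, r ≤ dist x v ∧
      ∀ a ∈ ({x, v} : Set X), ∀ b ∈ ({x, v} : Set X), PseudoChain f δ L a b) :
    ∃ L > 0, ∃ z : (ℕ → Bool) → X,
      ∀ w w' i, w i ≠ w' i → r / 2 < dist (f^[L * i] (z w)) (f^[L * i] (z w')) := by
  obtain ⟨δ, hδ, hshadow⟩ := hsh (r / 4) (by positivity)
  obtain ⟨v, L, hL, hxv, hch⟩ := hch δ hδ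
  let p : Bool → X := fun b ↦ bif b then v else x
  have hp : ∀ b, p b ∈ ({x, v} : Set X) := by intro b; cases b <;> simp [p]
  have hpsep : ∀ b b', b ≠ b' → r ≤ dist (p b) (p b') := by
    rintro (_ | _) (_ | _) h <;> simp_all [p, dist_comm]
  choose y hy hyL using exists_pseudoOrbit_of_pseudoChain hL fun i j ↦ hch _ (hp i) _ (hp j)
  choose z hz using fun w ↦ hshadow (y w) (hy w)
  refine ⟨L, hL, z, fun w w' i hi ↦ ?_⟩
  have h := hz w (L * i)
  have h' := hz w' (L * i)
  rw [hyL] at h h'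
  linarith [hpsep _ _ hi, dist_triangle4 (p (w i)) (f^[L * i] (z w)) (f^[L * i] (z w')) (p (w' i)),
    dist_comm (p (w i)) (f^[L * i] (z w))]

end Entropy

theorem minimal_nonregrec_implies_positive_entropy [MetricSpace X] [CompactSpace X]
    (f : X → X) (hf : Continuous f) (hsh : HasShadowing f)
    (h : ∃ x : X, MinimalPt f x ∧ ¬ RegRecPt f x) :
    0 < Dynamics.coverEntropy f Set.univ := by
  obtain ⟨x, hmin, hnr⟩ := h
  obtain ⟨r, hr, hch⟩ := hmin.exists_far_pseudoChains hf hnr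
  obtain ⟨L, hL, z, hz⟩ := hsh.exists_separated_words hr hch
  exact coverEntropy_pos_of_separated_words hL (half_pos hr) hz
end
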